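/- Let γ = 0 in the counterexample MDP vector field F(θ₁,θ₂) = (γσ(θ₂)σ'(θ₁), σ(θ₁)σ'(θ₂)) = (0, σ(θ₁)σ'(θ₂)). Then the line integral of F around any axis-aligned rectangle [a,b]×[c,d] with a < b, c < d is nonzero; hence F is not conservative. -/

import Mathlib

noncomputable def logistic (x : ℝ) : ℝ := 1 / (1 + Real.exp (-x))

noncomputable def logisticDeriv (x : ℝ) : ℝ := logistic x * (1 - logistic x)

lemma one_add_exp_pos (x : ℝ) : 0 < 1 + Real.exp (-x) := by positivity

lemma hasDerivAt_logistic (x : ℝ) : HasDerivAt logistic (logisticDeriv x) x := by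
  have h1 : HasDerivAt (fun x : ℝ => 1 + Real.exp (-x)) (-Real.exp (-x)) x := by
    have := (Real.hasDerivAt_exp (-x)).comp x ((hasDerivAt_id x).neg)
    simpa using (this.const_add 1)
  have h2 : HasDerivAt logistic (-(-Real.exp (-x)) / (1 + Real.exp (-x)) ^ 2) x := by
    have hl : logistic = fun y : ℝ => (1 + Real.exp (-y))⁻¹ := by
      funext y; simp [logistic, one_div]
    rw [hl]
    exact h1.inv (ne_of_gt (one_add_exp_pos x))
  convert h2 using 1
  have hne := ne_of_gt (one_add_exp_pos x)
  unfold logisticDeriv logistic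
  field_simp
  ring

lemma continuous_logistic : Continuous logistic := by
  unfold logistic
  exact continuous_const.div (by continuity) fun x => ne_of_gt (one_add_exp_pos x)

lemma continuous_logisticDeriv : Continuous logisticDeriv :=
  continuous_logistic.mul (continuous_const.sub continuous_logistic)

lemma integral_logisticDeriv (c d : ℝ) :
    (∫ y in c..d, logisticDeriv y) = logistic d - logistic c :=
  intervalIntegral.integral_eq_sub_of_hasDerivAt
    (fun x _ => hasDerivAt_logistic x)
    (continuous_logisticDeriv.intervalIntegrable c d)

lemma logistic_strictMono : StrictMono logistic := by
  intro x y hxy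
  unfold logistic
  have hy := one_add_exp_pos y
  have h := Real.exp_lt_exp.mpr (neg_lt_neg hxy)
  have hx := one_add_exp_pos x
  rw [div_lt_div_iff₀ hx hy]
  linarith

/-- With `γ = 0`, `F(θ₁,θ₂) = (0·σ(θ₂)σ'(θ₁), σ(θ₁)σ'(θ₂))`.  Its circulation
around any axis-aligned rectangle `[a,b] × [c,d]` is nonzero, so `F` is not
conservative. -/
theorem circulation_nonzero (a b c d : ℝ) (hab : a < b) (hcd : c < d) :
    (∫ x in a..b, (0 : ℝ) * logistic c * logisticDeriv x)
      + (∫ y in c..d, logistic b * logisticDeriv y)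
      - (∫ x in a..b, (0 : ℝ) * logistic d * logisticDeriv x)
      - (∫ y in c..d, logistic a * logisticDeriv y) ≠ 0 := by
  have hb : (∫ y in c..d, logistic b * logisticDeriv y)
      = logistic b * (logistic d - logistic c) := by
    rw [intervalIntegral.integral_const_mul, integral_logisticDeriv]
  have ha : (∫ y in c..d, logistic a * logisticDeriv y)
      = logistic a * (logistic d - logistic c) := by
    rw [intervalIntegral.integral_const_mul, integral_logisticDeriv]
  simp only [zero_mul, intervalIntegral.integral_zero, hb, ha]
  have h1 : logistic a < logistic b := logistic_strictMono hab
  have h2 : logistic c < logistic d := logistic_strictMono hcd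
  have : (logistic b - logistic a) * (logistic d - logistic c) > 0 :=
    mul_pos (by linarith) (by linarith)
  intro h
  nlinarith
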